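/- Let k, m > 0 be real with 2k + 4m > 5. For 0 < α small set β(α) = π/2 − k·α, γ(α) = π/2 − m·α, w(α) = sin(α)/sin(α + β(α)), y(α) = sin(β(α))/sin(α + β(α)), d(α) = y(α)·sin(2α)/sin(2α + γ(α)), x(α) = y(α)·sin(γ(α))/sin(2α + γ(α)), R(α) = (3d(α) + 4w(α))/(2·(2 − x(α))), and E(α) = (w(α) + d(α))/(1 − x(α)). Then, as α → 0⁺: (i) (R(α)/sin(α) − 5)/sin²(α) → k² − 10k + (3/2)m² − 16m + 39/2, and (ii) sin(α)·E(α) → 6/(2k + 4m − 5). -/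

import Mathlib

open Real Filter Topology

noncomputable def betaKM (k α : ℝ) : ℝ := π / 2 - k * α

noncomputable def gammaKM (m α : ℝ) : ℝ := π / 2 - m * α

noncomputable def wKM (k α : ℝ) : ℝ := Real.sin α / Real.sin (α + betaKM k α)

noncomputable def yKM (k α : ℝ) : ℝ := Real.sin (betaKM k α) / Real.sin (α + betaKM k α)

noncomputable def dKM (k m α : ℝ) : ℝ :=
  yKM k α * Real.sin (2 * α) / Real.sin (2 * α + gammaKM m α)

noncomputable def xKM (k m α : ℝ) : ℝ :=
  yKM k α * Real.sin (gammaKM m α) / Real.sin (2 * α + gammaKM m α)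

noncomputable def RKM (k m α : ℝ) : ℝ :=
  (3 * dKM k m α + 4 * wKM k α) / (2 * (2 - xKM k m α))

noncomputable def EKM (k m α : ℝ) : ℝ := (wKM k α + dKM k m α) / (1 - xKM k m α)

/-! With `β = π/2 - kα` and `γ = π/2 - mα` every sine in the definitions becomes a cosine,
e.g. `sin (α + β) = cos ((k - 1) α)`, so `R` and `E` have closed forms in `cos (c α)`.
Both `R / sin α - 5` and `1 - x` vanish to second order; their leading coefficients are read off
from `1 - cos (a α) cos (b α) ~ (a² + b²) α² / 2`. -/

theorem tendsto_sin_mul_div_self (a : ℝ) :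
    Tendsto (fun x => sin (a * x) / x) (𝓝[≠] 0) (𝓝 a) := by
  have h : HasDerivAt (fun x => sin (a * x)) a 0 := by
    simpa using ((hasDerivAt_id (0 : ℝ)).const_mul a).sin
  simpa [div_eq_inv_mul] using h.tendsto_slope_zero

theorem tendsto_sin_div_self : Tendsto (fun x => sin x / x) (𝓝[≠] 0) (𝓝 1) := by
  simpa using tendsto_sin_mul_div_self 1

theorem tendsto_cos_mul (a : ℝ) : Tendsto (fun x => cos (a * x)) (𝓝[≠] 0) (𝓝 1) := by
  have h : Continuous fun x : ℝ => cos (a * x) := by fun_prop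
  simpa using (h.tendsto 0).mono_left nhdsWithin_le_nhds

theorem tendsto_one_sub_cos_mul_div_sq (a : ℝ) :
    Tendsto (fun x => (1 - cos (a * x)) / x ^ 2) (𝓝[≠] 0) (𝓝 (a ^ 2 / 2)) := by
  have h := ((tendsto_sin_mul_div_self (a / 2)).pow 2).const_mul 2
  convert h using 2 with x
  · have : cos (a * x) = 1 - 2 * sin (a / 2 * x) ^ 2 := by
      rw [show a * x = 2 * (a / 2 * x) by ring, cos_two_mul, cos_sq']; ring
    rw [this, div_pow]; ring
  · ring

theorem tendsto_one_sub_cos_mul_mul_cos_mul_div_sq (a b : ℝ) :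
    Tendsto (fun x => (1 - cos (a * x) * cos (b * x)) / x ^ 2) (𝓝[≠] 0)
      (𝓝 ((a ^ 2 + b ^ 2) / 2)) := by
  have h := ((tendsto_one_sub_cos_mul_div_sq a).add (tendsto_one_sub_cos_mul_div_sq b)).sub
    ((tendsto_one_sub_cos_mul_div_sq a).mul ((tendsto_cos_mul b).const_sub 1))
  convert h using 2 with x
  · ring
  · ring

theorem sin_add_betaKM (k α : ℝ) : sin (α + betaKM k α) = cos ((k - 1) * α) := by
  rw [betaKM, ← sin_pi_div_two_sub]; ring_nf

theorem sin_betaKM (k α : ℝ) : sin (betaKM k α) = cos (k * α) := sin_pi_div_two_sub _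

theorem sin_two_mul_add_gammaKM (m α : ℝ) :
    sin (2 * α + gammaKM m α) = cos ((m - 2) * α) := by
  rw [gammaKM, ← sin_pi_div_two_sub]; ring_nf

theorem sin_gammaKM (m α : ℝ) : sin (gammaKM m α) = cos (m * α) := sin_pi_div_two_sub _

theorem wKM_eq (k α : ℝ) : wKM k α = sin α / cos ((k - 1) * α) := by
  rw [wKM, sin_add_betaKM]

theorem dKM_eq (k m α : ℝ) :
    dKM k m α = 2 * sin α * cos (k * α) * cos α / (cos ((k - 1) * α) * cos ((m - 2) * α)) := by
  rw [dKM, yKM, sin_add_betaKM, sin_betaKM, sin_two_mul_add_gammaKM, sin_two_mul]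
  ring

theorem xKM_eq (k m α : ℝ) :
    xKM k m α = cos (k * α) * cos (m * α) / (cos ((k - 1) * α) * cos ((m - 2) * α)) := by
  rw [xKM, yKM, sin_add_betaKM, sin_betaKM, sin_two_mul_add_gammaKM, sin_gammaKM]
  ring

section ClosedForms

variable {k m α : ℝ} (hA : cos ((k - 1) * α) ≠ 0) (hB : cos ((m - 2) * α) ≠ 0)
include hA hB

theorem RKM_eq : RKM k m α = sin α * (6 * cos (k * α) * cos α + 4 * cos ((m - 2) * α)) /
    (2 * (2 * cos ((k - 1) * α) * cos ((m - 2) * α) - cos (k * α) * cos (m * α))) := by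
  rw [RKM, wKM_eq, dKM_eq, xKM_eq]
  -- otherwise `field_simp` rewrites the arguments of the cosines and no longer sees `hA`, `hB`
  set A := cos ((k - 1) * α)
  set B := cos ((m - 2) * α)
  field_simp
  ring

theorem EKM_eq : EKM k m α = sin α * (cos ((m - 2) * α) + 2 * cos (k * α) * cos α) /
    (cos ((k - 1) * α) * cos ((m - 2) * α) - cos (k * α) * cos (m * α)) := by
  rw [EKM, wKM_eq, dKM_eq, xKM_eq]
  set A := cos ((k - 1) * α)
  set B := cos ((m - 2) * α)
  field_simp

end ClosedForms

theorem tendsto_RKM_div_sin_sub_five_div_sin_sq (k m : ℝ) :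
    Tendsto (fun α => (RKM k m α / sin α - 5) / sin α ^ 2) (𝓝[≠] 0)
      (𝓝 (k ^ 2 - 10 * k + 3 / 2 * m ^ 2 - 16 * m + 39 / 2)) := by
  -- the numerator `6 C cos x + 4 B - 10 (2 A B - C D)`, regrouped into defects `1 - ⋯`
  -- (its constant term `6 + 4 - 20 + 10` vanishes)
  have hnum : Tendsto (fun x => 20 * ((1 - cos ((k - 1) * x) * cos ((m - 2) * x)) / x ^ 2)
      - 10 * ((1 - cos (k * x) * cos (m * x)) / x ^ 2) - 6 * ((1 - cos (k * x) * cos x) / x ^ 2)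
      - 4 * ((1 - cos ((m - 2) * x)) / x ^ 2)) (𝓝[≠] 0)
      (𝓝 (2 * (k ^ 2 - 10 * k + 3 / 2 * m ^ 2 - 16 * m + 39 / 2))) := by
    have h := ((((tendsto_one_sub_cos_mul_mul_cos_mul_div_sq (k - 1) (m - 2)).const_mul 20).sub
      ((tendsto_one_sub_cos_mul_mul_cos_mul_div_sq k m).const_mul 10)).sub
      ((tendsto_one_sub_cos_mul_mul_cos_mul_div_sq k 1).const_mul 6)).sub
      ((tendsto_one_sub_cos_mul_div_sq (m - 2)).const_mul 4)
    simp only [one_mul] at h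
    convert h using 2
    ring
  have hden : Tendsto (fun x => 2 * (sin x / x) ^ 2 *
      (2 * cos ((k - 1) * x) * cos ((m - 2) * x) - cos (k * x) * cos (m * x))) (𝓝[≠] 0) (𝓝 2) := by
    have h := ((tendsto_sin_div_self.pow 2).const_mul 2).mul
      ((((tendsto_cos_mul (k - 1)).mul (tendsto_cos_mul (m - 2))).const_mul 2).sub
        ((tendsto_cos_mul k).mul (tendsto_cos_mul m)))
    convert h using 2
    · ring
    · norm_num
  have hlim := hnum.div hden two_ne_zero
  rw [mul_div_cancel_left₀ _ two_ne_zero] at hlim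
  refine hlim.congr' ?_
  filter_upwards [self_mem_nhdsWithin, hden.eventually_ne two_ne_zero,
    (tendsto_cos_mul (k - 1)).eventually_ne one_ne_zero,
    (tendsto_cos_mul (m - 2)).eventually_ne one_ne_zero] with x hx hD hA hB
  simp only [mul_ne_zero_iff, pow_ne_zero_iff two_ne_zero, div_ne_zero_iff] at hD
  obtain ⟨⟨-, hs, -⟩, hD⟩ := hD
  rw [Pi.div_apply, RKM_eq hA hB]
  replace hx : x ≠ 0 := hx
  generalize hE : 2 * cos ((k - 1) * x) * cos ((m - 2) * x) - cos (k * x) * cos (m * x) = E at hD ⊢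
  field_simp
  rw [← hE]
  ring_nf

theorem tendsto_sin_mul_EKM (k m : ℝ) (hkm : 2 * k + 4 * m ≠ 5) :
    Tendsto (fun α => sin α * EKM k m α) (𝓝[≠] 0) (𝓝 (6 / (2 * k + 4 * m - 5))) := by
  have hden : Tendsto (fun x => (1 - cos (k * x) * cos (m * x)) / x ^ 2
      - (1 - cos ((k - 1) * x) * cos ((m - 2) * x)) / x ^ 2) (𝓝[≠] 0)
      (𝓝 ((2 * k + 4 * m - 5) / 2)) := by
    convert (tendsto_one_sub_cos_mul_mul_cos_mul_div_sq k m).sub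
      (tendsto_one_sub_cos_mul_mul_cos_mul_div_sq (k - 1) (m - 2)) using 2
    ring
  have hnum : Tendsto (fun x => (sin x / x) ^ 2 * (cos ((m - 2) * x) + 2 * cos (k * x) * cos x))
      (𝓝[≠] 0) (𝓝 3) := by
    have h := (tendsto_sin_div_self.pow 2).mul
      ((tendsto_cos_mul (m - 2)).add (((tendsto_cos_mul k).mul (tendsto_cos_mul 1)).const_mul 2))
    simp only [one_mul] at h
    convert h using 2
    · ring
    · norm_num
  have hlim := hnum.div hden (div_ne_zero (sub_ne_zero.mpr hkm) two_ne_zero)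
  rw [div_div_eq_mul_div, show (3 : ℝ) * 2 = 6 by norm_num] at hlim
  refine hlim.congr' ?_
  filter_upwards [self_mem_nhdsWithin,
    (tendsto_cos_mul (k - 1)).eventually_ne one_ne_zero,
    (tendsto_cos_mul (m - 2)).eventually_ne one_ne_zero] with x hx hA hB
  replace hx : x ≠ 0 := hx
  rw [Pi.div_apply, EKM_eq hA hB]
  field_simp
  ring_nf

theorem stmt19_general (k m : ℝ) (hkm : 5 < 2 * k + 4 * m) :
    Tendsto (fun α : ℝ => (RKM k m α / Real.sin α - 5) / (Real.sin α) ^ 2)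
        (𝓝[>] 0) (𝓝 (k ^ 2 - 10 * k + 3 / 2 * m ^ 2 - 16 * m + 39 / 2)) ∧
      Tendsto (fun α : ℝ => Real.sin α * EKM k m α)
        (𝓝[>] 0) (𝓝 (6 / (2 * k + 4 * m - 5))) :=
  ⟨(tendsto_RKM_div_sin_sub_five_div_sin_sq k m).mono_left (nhdsGT_le_nhdsNE 0),
    (tendsto_sin_mul_EKM k m hkm.ne').mono_left (nhdsGT_le_nhdsNE 0)⟩

theorem stmt19 (k m : ℝ) (hk : 0 < k) (hm : 0 < m) (hkm : 5 < 2 * k + 4 * m) :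
    Tendsto (fun α : ℝ => (RKM k m α / Real.sin α - 5) / (Real.sin α) ^ 2)
        (𝓝[>] 0) (𝓝 (k ^ 2 - 10 * k + 3 / 2 * m ^ 2 - 16 * m + 39 / 2)) ∧
      Tendsto (fun α : ℝ => Real.sin α * EKM k m α)
        (𝓝[>] 0) (𝓝 (6 / (2 * k + 4 * m - 5))) :=
  stmt19_general k m hkm
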